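/- arXiv:cond-mat/0605551 — 2 statements merged into one kernel-verified Lean document; each statement's English description precedes it below -/
import Mathlib

section
/- At the root of unity q = exp(2π√(−1)/N), the N-th powers vanish: (B_+)^N = (B_−)^N = (C_+)^N = (C_−)^N = 0. -/
open scoped BigOperators Matrix

noncomputable section

abbrev EndW (N L : ℕ) := Matrix (Fin L → Fin N) (Fin L → Fin N) ℂ

def tensorOp {N L : ℕ} (M : Fin L → Matrix (Fin N) (Fin N) ℂ) : EndW N L :=
  Matrix.of fun σ τ => ∏ i, M i (σ i) (τ i)

def siteOp {N L : ℕ} (i : Fin L) (M : Matrix (Fin N) (Fin N) ℂ) : EndW N L :=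
  tensorOp fun j => if j = i then M else 1

def qnum (q : ℂ) (m : ℕ) : ℂ := (q ^ m - (q ^ m)⁻¹) / (q - q⁻¹)

def qfact (q : ℂ) (m : ℕ) : ℂ := ∏ i ∈ Finset.range m, qnum q (i + 1)

def zpowMat {n : ℕ} (M : Matrix (Fin n) (Fin n) ℂ) (s : ℤ) : Matrix (Fin n) (Fin n) ℂ :=
  if 0 ≤ s then M ^ s.toNat else M⁻¹ ^ (-s).toNat

/-- `q = exp(2π√−1/N)`, a primitive `N`-th root of unity. -/
def qR (N : ℕ) : ℂ := Complex.exp (2 * Real.pi * Complex.I / N)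

/-- `q^{1/2} = exp(π√−1/N)`. -/
def qhR (N : ℕ) : ℂ := Complex.exp (Real.pi * Complex.I / N)

/-- `Z v_σ = q^σ v_σ`. -/
def Zmat (N : ℕ) : Matrix (Fin N) (Fin N) ℂ :=
  Matrix.diagonal fun σ => qR N ^ (σ : ℕ)

/-- `Z⁻¹ v_σ = q^{−σ} v_σ`. -/
def ZmatInv (N : ℕ) : Matrix (Fin N) (Fin N) ℂ :=
  Matrix.diagonal fun σ => (qR N ^ (σ : ℕ))⁻¹

/-- `X v_σ = v_{σ+1 mod N}`. -/
def Xmat (N : ℕ) : Matrix (Fin N) (Fin N) ℂ :=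
  Matrix.of fun ρ σ => if (ρ : ℕ) = ((σ : ℕ) + 1) % N then 1 else 0

/-- `X⁻¹ v_σ = v_{σ−1 mod N}`. -/
def XmatInv (N : ℕ) : Matrix (Fin N) (Fin N) ℂ :=
  Matrix.of fun ρ σ => if ((ρ : ℕ) + 1) % N = (σ : ℕ) then 1 else 0

/-- Nilpotent representation: `k̂^{1/2} := −q^{−1/2} Z⁻¹`. -/
def khalfNil (N : ℕ) : Matrix (Fin N) (Fin N) ℂ := (-(qhR N)⁻¹) • ZmatInv N

/-- Nilpotent representation: `ê := X⁻¹(Z⁻¹ − Z)/(q − q⁻¹)`. -/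
def eNil (N : ℕ) : Matrix (Fin N) (Fin N) ℂ :=
  (qR N - (qR N)⁻¹)⁻¹ • (XmatInv N * (ZmatInv N - Zmat N))

/-- Nilpotent representation: `f̂ := (Z − Z⁻¹)X/(q − q⁻¹)`. -/
def fNil (N : ℕ) : Matrix (Fin N) (Fin N) ℂ :=
  (qR N - (qR N)⁻¹)⁻¹ • ((Zmat N - ZmatInv N) * Xmat N)

/-- `k̂^{−1/2} := (k̂^{1/2})⁻¹`. -/
def khalfMNil (N : ℕ) : Matrix (Fin N) (Fin N) ℂ := (khalfNil N)⁻¹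

/-- `B₊` for the nilpotent representation. -/
def BplusNil (N L : ℕ) : EndW N L :=
  (qhR N ^ (L + 1))⁻¹ • ∑ i : Fin L, qR N ^ ((i : ℕ) + 1) •
    tensorOp fun j => if j < i then khalfMNil N else if j = i then fNil N else khalfNil N

/-- `B₋` for the nilpotent representation. -/
def BminusNil (N L : ℕ) : EndW N L :=
  (qhR N ^ (L + 1))⁻¹ • ∑ i : Fin L, qR N ^ ((i : ℕ) + 1) •
    tensorOp fun j => if j < i then khalfNil N else if j = i then fNil N else khalfMNil N

/-- `C₊` for the nilpotent representation. -/
def CplusNil (N L : ℕ) : EndW N L :=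
  qhR N ^ (L + 1) • ∑ i : Fin L, (qR N ^ ((i : ℕ) + 1))⁻¹ •
    tensorOp fun j => if j < i then khalfNil N else if j = i then eNil N else khalfMNil N

/-- `C₋` for the nilpotent representation. -/
def CminusNil (N L : ℕ) : EndW N L :=
  qhR N ^ (L + 1) • ∑ i : Fin L, (qR N ^ ((i : ℕ) + 1))⁻¹ •
    tensorOp fun j => if j < i then khalfMNil N else if j = i then eNil N else khalfNil N

/-- The `L`-operator of the nilpotent Bazhanov–Stroganov model. -/
def LopNBS (N L : ℕ) (i : Fin L) (z : ℂ) : Matrix (Fin 2) (Fin 2) (EndW N L) :=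
  !![(-(z * (qR N)⁻¹)) • siteOp i (ZmatInv N) + z⁻¹ • siteOp i (Zmat N),
     siteOp i (-((ZmatInv N - Zmat N) * Xmat N));
     siteOp i (XmatInv N * (ZmatInv N - Zmat N)),
     z⁻¹ • siteOp i (ZmatInv N) + (-(z * qR N)) • siteOp i (Zmat N)]

/-- The monodromy matrix `L_L(z) ⋯ L_1(z)` of the NBS model. -/
def monoNBS (N L : ℕ) (z : ℂ) : Matrix (Fin 2) (Fin 2) (EndW N L) :=
  ((List.ofFn fun i : Fin L => LopNBS N L i z).reverse).prod

def AopNBS (N L : ℕ) (z : ℂ) : EndW N L := monoNBS N L z 0 0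
def BopNBS (N L : ℕ) (z : ℂ) : EndW N L := monoNBS N L z 0 1
def CopNBS (N L : ℕ) (z : ℂ) : EndW N L := monoNBS N L z 1 0
def DopNBS (N L : ℕ) (z : ℂ) : EndW N L := monoNBS N L z 1 1

/-- The transfer matrix of the NBS model. -/
def tauNBS (N L : ℕ) (z : ℂ) : EndW N L := AopNBS N L z + DopNBS N L z

/-- `A∞ := (k̂^{1/2})^{⊗L}`. -/
def AinfNil (N L : ℕ) : EndW N L := tensorOp fun _ => khalfNil N

/-- `ĥ v_σ = (N − 1 − 2σ) v_σ`. -/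
def hmatN (N : ℕ) : Matrix (Fin N) (Fin N) ℂ :=
  Matrix.diagonal fun σ => (N : ℂ) - 1 - 2 * ((σ : ℕ) : ℂ)

/-- `H^{(N)} := (1/N) Σ_i ĥ_i`. -/
def Hop (N L : ℕ) : EndW N L := ((N : ℂ))⁻¹ • ∑ i : Fin L, siteOp i (hmatN N)

/-- `s_i(λ) = Σ_{j<i} λ_j − Σ_{j>i} λ_j`. -/
def sExp {L : ℕ} (lam : Fin L → ℕ) (i : Fin L) : ℤ :=
  (∑ j ∈ Finset.univ.filter (fun j => j < i), (lam j : ℤ)) -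
    ∑ j ∈ Finset.univ.filter (fun j => i < j), (lam j : ℤ)

/-- `Σ_j (2j − (L+1)) λ_j` (with `j` running 1-indexed), so that
`q^{Σ_j (j − (L+1)/2) λ_j} = qh^{wExp L λ}`. -/
def wExp (L : ℕ) (lam : Fin L → ℕ) : ℤ :=
  ∑ j : Fin L, (2 * ((j : ℕ) : ℤ) + 2 - ((L : ℤ) + 1)) * (lam j : ℤ)

/-- The divided power `B_+^{(n)}`. -/
def BdivP (N L : ℕ) (n : ℕ) : EndW N L :=
  ∑ lam ∈ Finset.univ.filter (fun lam : Fin L → Fin N => ∑ i, ((lam i : ℕ)) = n),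
    (qhR N ^ wExp L (fun j => (lam j : ℕ)) * (∏ i, qfact (qR N) ((lam i : ℕ)))⁻¹) •
      tensorOp fun i =>
        fNil N ^ ((lam i : ℕ)) * zpowMat (khalfNil N) (sExp (fun j => ((lam j : ℕ))) i)

/-- The divided power `B_-^{(n)}`. -/
def BdivM (N L : ℕ) (n : ℕ) : EndW N L :=
  ∑ lam ∈ Finset.univ.filter (fun lam : Fin L → Fin N => ∑ i, ((lam i : ℕ)) = n),
    (qhR N ^ wExp L (fun j => (lam j : ℕ)) * (∏ i, qfact (qR N) ((lam i : ℕ)))⁻¹) •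
      tensorOp fun i =>
        fNil N ^ ((lam i : ℕ)) * zpowMat (khalfNil N) (-sExp (fun j => ((lam j : ℕ))) i)

/-- The divided power `C_+^{(n)}`. -/
def CdivP (N L : ℕ) (n : ℕ) : EndW N L :=
  ∑ lam ∈ Finset.univ.filter (fun lam : Fin L → Fin N => ∑ i, ((lam i : ℕ)) = n),
    (qhR N ^ (-wExp L (fun j => (lam j : ℕ))) * (∏ i, qfact (qR N) ((lam i : ℕ)))⁻¹) •
      tensorOp fun i =>
        zpowMat (khalfNil N) (-sExp (fun j => ((lam j : ℕ))) i) * eNil N ^ ((lam i : ℕ))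

/-- The divided power `C_-^{(n)}`. -/
def CdivM (N L : ℕ) (n : ℕ) : EndW N L :=
  ∑ lam ∈ Finset.univ.filter (fun lam : Fin L → Fin N => ∑ i, ((lam i : ℕ)) = n),
    (qhR N ^ (-wExp L (fun j => (lam j : ℕ))) * (∏ i, qfact (qR N) ((lam i : ℕ)))⁻¹) •
      tensorOp fun i =>
        zpowMat (khalfNil N) (sExp (fun j => ((lam j : ℕ))) i) * eNil N ^ ((lam i : ℕ))

/-- The reference state `|0⟩ = v₀^{⊗L}`. -/
def vac (N L : ℕ) : (Fin L → Fin N) → ℂ := fun σ => if ∀ i, (σ i : ℕ) = 0 then 1 else 0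

/-- The Bethe equations. -/
def BetheEqs (N L R : ℕ) (q : ℂ) (zs : Fin R → ℂ) : Prop :=
  ∀ i : Fin R,
    ((zs i ^ 2 * q ^ (N - 1) - 1) / (zs i ^ 2 - q ^ (N - 1))) ^ L =
      q ^ L * ∏ j ∈ Finset.univ.erase i,
        (zs i ^ 2 * q ^ 2 - zs j ^ 2) / (zs i ^ 2 - zs j ^ 2 * q ^ 2)

/-- Regularity of a Bethe solution: nonzero, pairwise distinct, and nonzero denominators. -/
def RegularBethe (N L R : ℕ) (q : ℂ) (zs : Fin R → ℂ) : Prop :=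
  (∀ i, zs i ≠ 0) ∧ Function.Injective zs ∧
    (∀ i, zs i ^ 2 - q ^ (N - 1) ≠ 0) ∧
    (∀ i j, j ≠ i → zs i ^ 2 - zs j ^ 2 * q ^ 2 ≠ 0) ∧
    BetheEqs N L R q zs

/-- The Bethe state `B(z_1) ⋯ B(z_R) |0⟩` of the NBS model. -/
def betheStateNBS (N L R : ℕ) (zs : Fin R → ℂ) : (Fin L → Fin N) → ℂ :=
  ((List.ofFn fun i : Fin R => BopNBS N L (zs i)).prod) *ᵥ vac N L

/-!
Each of `B_±`, `C_±` is a scalar multiple of a sum over the sites `i` of terms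
`xᵢ = K ⊗ ⋯ ⊗ K ⊗ S ⊗ K' ⊗ ⋯ ⊗ K'`, where `S ∈ {f̂, ê}` moves the weight `σ` by one step (so
`S ^ N = 0`) and `K, K' ∈ {k̂^{±1/2}}` are diagonal. Since `S` and `k̂^{1/2}` `q`-commute, two
terms `ζ`-commute, `xⱼ xᵢ = ζ xᵢ xⱼ` for `i < j`, with `ζ = q^{±2}`: one factor `q^{±1}` from each
of the sites `i` and `j`. As `N` is odd, `ζ` is a primitive `N`-th root of unity, so in the
`ζ`-binomial expansion of `(x + y) ^ N` all Gaussian binomials `[N choose k]_ζ` with `0 < k < N`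
vanish, and `(x + y) ^ N = 0` whenever `x ^ N = y ^ N = 0`. Induction over the sites finishes.
-/

open Finset

section QBinomial

variable {R : Type*} [CommSemiring R]

/-- `qBinom ζ i j` is the Gaussian binomial coefficient `[i + j choose i]_ζ`; indexing it by the two
parts makes the ζ-binomial theorem a sum over an antidiagonal. -/
def qBinom (ζ : R) : ℕ → ℕ → R
  | 0, _ => 1
  | _ + 1, 0 => 1
  | i + 1, j + 1 => qBinom ζ i (j + 1) + ζ ^ (i + 1) * qBinom ζ (i + 1) j

theorem sum_antidiagonal_succ_qBinom_smul {M : Type*} [AddCommMonoid M] [Module R M] (ζ : R)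
    (f : ℕ → ℕ → M) (n : ℕ) :
    ∑ p ∈ antidiagonal (n + 1), qBinom ζ p.1 p.2 • f p.1 p.2 =
      ∑ p ∈ antidiagonal n, qBinom ζ p.1 p.2 • f (p.1 + 1) p.2 +
        ∑ p ∈ antidiagonal n, (ζ ^ p.1 * qBinom ζ p.1 p.2) • f p.1 (p.2 + 1) := by
  cases n with
  | zero => simp [Nat.sum_antidiagonal_succ, qBinom, add_comm]
  | succ m =>
    rw [Nat.sum_antidiagonal_succ, Nat.sum_antidiagonal_succ', Nat.sum_antidiagonal_succ',
      Nat.sum_antidiagonal_succ (n := m)]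
    simp only [qBinom, add_smul, sum_add_distrib, pow_zero, one_mul, mul_smul]
    abel

variable {A : Type*} [Semiring A] [Algebra R A] {ζ : R} {x y : A}

theorem mul_pow_eq_smul_pow_mul (h : y * x = ζ • (x * y)) (k : ℕ) :
    y * x ^ k = ζ ^ k • (x ^ k * y) := by
  induction k with
  | zero => simp
  | succ k ih =>
    rw [pow_succ, ← mul_assoc, ih, smul_mul_assoc, mul_assoc, h, mul_smul_comm, smul_smul,
      ← mul_assoc, ← pow_succ, ← pow_succ]

theorem add_pow_eq_sum_qBinom (h : y * x = ζ • (x * y)) (n : ℕ) :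
    (x + y) ^ n = ∑ p ∈ antidiagonal n, qBinom ζ p.1 p.2 • (x ^ p.1 * y ^ p.2) := by
  induction n with
  | zero => simp [qBinom]
  | succ n ih =>
    have hstep : ∀ i j : ℕ,
        (x + y) * (x ^ i * y ^ j) = x ^ (i + 1) * y ^ j + ζ ^ i • (x ^ i * y ^ (j + 1)) := by
      intro i j
      rw [add_mul, ← mul_assoc, ← pow_succ', ← mul_assoc, mul_pow_eq_smul_pow_mul h,
        smul_mul_assoc, mul_assoc, ← pow_succ']
    rw [pow_succ', ih, mul_sum,
      sum_antidiagonal_succ_qBinom_smul ζ (fun i j => x ^ i * y ^ j), ← sum_add_distrib]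
    refine sum_congr rfl fun p _ => ?_
    rw [mul_smul_comm, hstep, smul_add, mul_smul, smul_comm]

end QBinomial

section RootOfUnity

variable {R : Type*} [CommRing R]

theorem one_sub_pow_mul_qBinom_succ (ζ : R) : ∀ i j : ℕ,
    (1 - ζ ^ (i + 1)) * qBinom ζ (i + 1) j = (1 - ζ ^ (j + 1)) * qBinom ζ i (j + 1)
  | 0, 0 => by simp [qBinom]
  | 0, j + 1 => by
    have ih := one_sub_pow_mul_qBinom_succ ζ 0 j
    simp only [qBinom] at ih ⊢
    linear_combination ζ * ih
  | i + 1, 0 => by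
    have ih := one_sub_pow_mul_qBinom_succ ζ i 0
    simp only [qBinom] at ih ⊢
    linear_combination ih
  | i + 1, j + 1 => by
    have ih₁ := one_sub_pow_mul_qBinom_succ ζ (i + 1) j
    have ih₂ := one_sub_pow_mul_qBinom_succ ζ i (j + 1)
    have e₁ := qBinom.eq_3 ζ (i + 1) j
    have e₂ := qBinom.eq_3 ζ i (j + 1)
    linear_combination ζ ^ (i + 2) * ih₁ + ih₂ + (1 - ζ ^ (i + 2)) * e₁ - (1 - ζ ^ (j + 2)) * e₂

variable {ζ : R}

theorem IsPrimitiveRoot.qBinom_eq_zero [IsDomain R] {N : ℕ} (hζ : IsPrimitiveRoot ζ N) :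
    ∀ {i j : ℕ}, i + j = N → 0 < i → 0 < j → qBinom ζ i j = 0
  | i + 1, j, hij, _, hj => by
    have hζi : 1 - ζ ^ (i + 1) ≠ 0 :=
      sub_ne_zero.mpr (hζ.pow_ne_one_of_pos_of_lt (by omega) (by omega)).symm
    have hrhs : (1 - ζ ^ (j + 1)) * qBinom ζ i (j + 1) = 0 := by
      rcases Nat.eq_zero_or_pos i with rfl | hi
      · rw [show j + 1 = N by omega, hζ.pow_eq_one, sub_self, zero_mul]
      · rw [hζ.qBinom_eq_zero (by omega) hi (by omega), mul_zero]
    exact (mul_eq_zero.mp ((one_sub_pow_mul_qBinom_succ ζ i j).trans hrhs)).resolve_left hζi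

variable {A : Type*} [Ring A] [Algebra R A] [IsDomain R] {N : ℕ}

theorem add_pow_eq_zero_of_mul_eq_smul (hζ : IsPrimitiveRoot ζ N) {x y : A}
    (h : y * x = ζ • (x * y)) (hx : x ^ N = 0) (hy : y ^ N = 0) : (x + y) ^ N = 0 := by
  rw [add_pow_eq_sum_qBinom h]
  refine sum_eq_zero fun ⟨i, j⟩ hij => ?_
  rw [HasAntidiagonal.mem_antidiagonal] at hij
  dsimp only
  rcases Nat.eq_zero_or_pos i with rfl | hi
  · simp [show j = N by omega, hy]
  rcases Nat.eq_zero_or_pos j with rfl | hj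
  · simp [show i = N by omega, hx]
  rw [hζ.qBinom_eq_zero hij hi hj, zero_smul]

theorem sum_pow_eq_zero_of_mul_eq_smul (hN : N ≠ 0) (hζ : IsPrimitiveRoot ζ N) :
    ∀ {m : ℕ} (x : Fin m → A), (∀ i j, i < j → x j * x i = ζ • (x i * x j)) →
      (∀ i, x i ^ N = 0) → (∑ i, x i) ^ N = 0
  | 0, _, _, _ => by simp [zero_pow hN]
  | m + 1, x, hcomm, hnil => by
    rw [Fin.sum_univ_castSucc]
    refine add_pow_eq_zero_of_mul_eq_smul hζ ?_ ?_ (hnil _)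
    · rw [sum_mul, mul_sum, smul_sum]
      exact sum_congr rfl fun i _ => hcomm _ _ (Fin.castSucc_lt_last i)
    · exact sum_pow_eq_zero_of_mul_eq_smul hN hζ _
        (fun i j hij => hcomm _ _ (Fin.castSucc_lt_castSucc_iff.mpr hij)) fun i => hnil _

theorem smul_sum_smul_pow_eq_zero (hN : N ≠ 0) (hζ : IsPrimitiveRoot ζ N) {m : ℕ} (c : R)
    (a : Fin m → R) (T : Fin m → A) (hcomm : ∀ i j, i < j → T j * T i = ζ • (T i * T j))
    (hnil : ∀ i, T i ^ N = 0) : (c • ∑ i, a i • T i) ^ N = 0 := by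
  rw [smul_pow, sum_pow_eq_zero_of_mul_eq_smul hN hζ _ _ fun i => by rw [smul_pow, hnil, smul_zero],
    smul_zero]
  intro i j hij
  rw [smul_mul_smul_comm, smul_mul_smul_comm, hcomm i j hij, smul_smul, smul_smul]
  congr 1
  ring

end RootOfUnity

section TensorOp

variable {N L : ℕ}

theorem tensorOp_mul (M M' : Fin L → Matrix (Fin N) (Fin N) ℂ) :
    tensorOp M * tensorOp M' = tensorOp (M * M') := by
  ext σ τ
  simp only [tensorOp, Matrix.mul_apply, Matrix.of_apply, Pi.mul_apply, Fintype.prod_sum,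
    prod_mul_distrib]

theorem tensorOp_one : tensorOp (1 : Fin L → Matrix (Fin N) (Fin N) ℂ) = 1 := by
  ext σ τ
  simp [tensorOp, Matrix.one_apply, prod_boole, funext_iff]

def tensorOpHom : (Fin L → Matrix (Fin N) (Fin N) ℂ) →* EndW N L where
  toFun := tensorOp
  map_one' := tensorOp_one
  map_mul' M M' := (tensorOp_mul M M').symm

theorem tensorOp_pow (M : Fin L → Matrix (Fin N) (Fin N) ℂ) (n : ℕ) :
    tensorOp M ^ n = tensorOp (M ^ n) :=
  (map_pow tensorOpHom M n).symm

theorem tensorOp_smul (c : Fin L → ℂ) (M : Fin L → Matrix (Fin N) (Fin N) ℂ) :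
    tensorOp (fun k => c k • M k) = (∏ k, c k) • tensorOp M := by
  ext σ τ
  simp [tensorOp, prod_mul_distrib]

theorem tensorOp_eq_zero {M : Fin L → Matrix (Fin N) (Fin N) ℂ} (i : Fin L) (h : M i = 0) :
    tensorOp M = 0 := by
  ext σ τ
  exact prod_eq_zero (mem_univ i) (by rw [h, Matrix.zero_apply])

/-- `K₁ ⊗ ⋯ ⊗ K₁ ⊗ S ⊗ K₂ ⊗ ⋯ ⊗ K₂` with `S` at site `i`: the summands of `B_±` and `C_±`. -/
def stringOp (K₁ S K₂ : Matrix (Fin N) (Fin N) ℂ) (i : Fin L) : EndW N L :=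
  tensorOp fun j => if j < i then K₁ else if j = i then S else K₂

variable {K₁ S K₂ : Matrix (Fin N) (Fin N) ℂ}

theorem stringOp_pow_eq_zero {n : ℕ} (hS : S ^ n = 0) (i : Fin L) :
    stringOp K₁ S K₂ i ^ n = 0 := by
  rw [stringOp, tensorOp_pow]
  exact tensorOp_eq_zero i (by simpa using hS)

theorem stringOp_mul_stringOp {ω : ℂ} (h₁ : K₁ * S = ω • (S * K₁)) (h₂ : S * K₂ = ω • (K₂ * S))
    (h₁₂ : Commute K₁ K₂) {i j : Fin L} (hij : i < j) :
    stringOp K₁ S K₂ j * stringOp K₁ S K₂ i =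
      ω ^ 2 • (stringOp K₁ S K₂ i * stringOp K₁ S K₂ j) := by
  -- the factors at sites `i` and `j` each pick up `ω`; all other sites commute
  have hsite : ∀ k : Fin L,
      (if k < j then K₁ else if k = j then S else K₂) *
          (if k < i then K₁ else if k = i then S else K₂) =
        ((if k = i then ω else 1) * (if k = j then ω else 1)) •
          ((if k < i then K₁ else if k = i then S else K₂) *
            (if k < j then K₁ else if k = j then S else K₂)) := by
    intro k
    rcases lt_trichotomy k i with hki | rfl | hik
    · simp [hki, hki.trans hij, hki.ne, (hki.trans hij).ne]
    · simp [hij, hij.ne, h₁]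
    rcases lt_trichotomy k j with hkj | rfl | hjk
    · simp [hkj, hkj.ne, hik.ne', hik.not_gt, h₁₂.eq]
    · simp [hik.ne', hik.not_gt, h₂]
    · simp [hjk.ne', hjk.not_gt, hik.ne', hik.not_gt]
  rw [stringOp, stringOp, tensorOp_mul, tensorOp_mul]
  simp only [Pi.mul_def, hsite, tensorOp_smul, prod_mul_distrib, prod_ite_eq', mem_univ, if_true,
    sq]

end TensorOp

namespace Matrix

theorem diagonal_mul_eq_smul_mul_diagonal {n R : Type*} [Fintype n] [DecidableEq n]
    [CommSemiring R] {A : Matrix n n R} {d : n → R} {c : R}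
    (h : ∀ ρ σ, A ρ σ ≠ 0 → d ρ = c * d σ) : diagonal d * A = c • (A * diagonal d) := by
  ext ρ σ
  rw [diagonal_mul, Matrix.smul_apply, mul_diagonal, smul_eq_mul]
  by_cases hA : A ρ σ = 0
  · simp [hA]
  · rw [h ρ σ hA]
    ring

theorem pow_eq_zero_of_subdiagonal {R : Type*} [Semiring R] {N : ℕ} {A : Matrix (Fin N) (Fin N) R}
    (hA : ∀ ρ σ, A ρ σ ≠ 0 → (ρ : ℕ) = σ + 1) : A ^ N = 0 := by
  have hpow : ∀ k (ρ σ : Fin N), (A ^ k) ρ σ ≠ 0 → (ρ : ℕ) = σ + k := by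
    intro k
    induction k with
    | zero =>
      intro ρ σ h
      rw [pow_zero, one_apply] at h
      split_ifs at h with hρσ
      · simp [hρσ]
      · exact absurd rfl h
    | succ k ih =>
      intro ρ σ h
      rw [pow_succ, mul_apply] at h
      obtain ⟨τ, -, hτ⟩ := exists_ne_zero_of_sum_ne_zero h
      have := ih ρ τ (left_ne_zero_of_mul hτ)
      have := hA τ σ (right_ne_zero_of_mul hτ)
      omega
  ext ρ σ
  by_contra h
  have := hpow N ρ σ h
  omega

end Matrix

section NilpotentRep

open Matrix

variable {N : ℕ}

theorem qR_ne_zero : qR N ≠ 0 := Complex.exp_ne_zero _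

theorem khalfNil_eq_diagonal :
    khalfNil N = diagonal fun σ : Fin N => -(qhR N)⁻¹ * (qR N)⁻¹ ^ (σ : ℕ) := by
  rw [khalfNil, ZmatInv, ← diagonal_smul]
  simp [inv_pow]

theorem khalfMNil_eq_diagonal :
    khalfMNil N = diagonal fun σ : Fin N => -qhR N * qR N ^ (σ : ℕ) := by
  refine inv_eq_right_inv ?_
  rw [khalfNil_eq_diagonal, diagonal_mul_diagonal, ← diagonal_one]
  congr 1
  ext σ
  have hqh : qhR N ≠ 0 := Complex.exp_ne_zero _
  rw [inv_pow]
  field_simp [qR_ne_zero, hqh]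

theorem khalfMNil_commute_khalfNil : Commute (khalfMNil N) (khalfNil N) := by
  rw [khalfMNil_eq_diagonal, khalfNil_eq_diagonal]
  exact commute_diagonal _ _

theorem fNil_apply_ne_zero {ρ σ : Fin N} (h : fNil N ρ σ ≠ 0) : (ρ : ℕ) = σ + 1 := by
  simp only [fNil, Zmat, ZmatInv, Xmat, diagonal_sub, Matrix.smul_apply, diagonal_mul, of_apply,
    smul_eq_mul] at h
  split_ifs at h with hρ
  · rcases Nat.lt_or_ge (σ + 1) N with hlt | hge
    · rwa [Nat.mod_eq_of_lt hlt] at hρ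
    · -- the wrap-around entry carries the factor `q^0 - q^0 = 0`
      rw [show (σ : ℕ) + 1 = N by omega, Nat.mod_self] at hρ
      simp [hρ] at h
  · simp at h

theorem eNil_apply_ne_zero {ρ σ : Fin N} (h : eNil N ρ σ ≠ 0) : (σ : ℕ) = ρ + 1 := by
  simp only [eNil, Zmat, ZmatInv, XmatInv, diagonal_sub, Matrix.smul_apply, mul_diagonal, of_apply,
    smul_eq_mul] at h
  split_ifs at h with hσ
  · rcases Nat.lt_or_ge (ρ + 1) N with hlt | hge
    · rw [Nat.mod_eq_of_lt hlt] at hσ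
      exact hσ.symm
    · rw [show (ρ : ℕ) + 1 = N by omega, Nat.mod_self] at hσ
      simp [← hσ] at h
  · simp at h

theorem fNil_pow_eq_zero : fNil N ^ N = 0 :=
  pow_eq_zero_of_subdiagonal fun _ _ => fNil_apply_ne_zero

theorem eNil_pow_eq_zero : eNil N ^ N = 0 := by
  rw [← transpose_eq_zero, transpose_pow]
  exact pow_eq_zero_of_subdiagonal fun _ _ h => eNil_apply_ne_zero h

theorem khalfNil_mul_fNil : khalfNil N * fNil N = (qR N)⁻¹ • (fNil N * khalfNil N) := by
  rw [khalfNil_eq_diagonal]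
  refine diagonal_mul_eq_smul_mul_diagonal fun ρ σ h => ?_
  rw [fNil_apply_ne_zero h, pow_succ]
  ring

theorem khalfMNil_mul_fNil : khalfMNil N * fNil N = qR N • (fNil N * khalfMNil N) := by
  rw [khalfMNil_eq_diagonal]
  refine diagonal_mul_eq_smul_mul_diagonal fun ρ σ h => ?_
  rw [fNil_apply_ne_zero h, pow_succ]
  ring

theorem khalfNil_mul_eNil : khalfNil N * eNil N = qR N • (eNil N * khalfNil N) := by
  rw [khalfNil_eq_diagonal]
  refine diagonal_mul_eq_smul_mul_diagonal fun ρ σ h => ?_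
  rw [eNil_apply_ne_zero h, pow_succ]
  field_simp [qR_ne_zero]

theorem khalfMNil_mul_eNil : khalfMNil N * eNil N = (qR N)⁻¹ • (eNil N * khalfMNil N) := by
  rw [khalfMNil_eq_diagonal]
  refine diagonal_mul_eq_smul_mul_diagonal fun ρ σ h => ?_
  rw [eNil_apply_ne_zero h, pow_succ]
  field_simp [qR_ne_zero]

theorem fNil_mul_khalfNil : fNil N * khalfNil N = qR N • (khalfNil N * fNil N) := by
  rw [khalfNil_mul_fNil, smul_inv_smul₀ qR_ne_zero]

theorem fNil_mul_khalfMNil : fNil N * khalfMNil N = (qR N)⁻¹ • (khalfMNil N * fNil N) := by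
  rw [khalfMNil_mul_fNil, inv_smul_smul₀ qR_ne_zero]

theorem eNil_mul_khalfNil : eNil N * khalfNil N = (qR N)⁻¹ • (khalfNil N * eNil N) := by
  rw [khalfNil_mul_eNil, inv_smul_smul₀ qR_ne_zero]

theorem eNil_mul_khalfMNil : eNil N * khalfMNil N = qR N • (khalfMNil N * eNil N) := by
  rw [khalfMNil_mul_eNil, smul_inv_smul₀ qR_ne_zero]

end NilpotentRep

theorem Nth_powers_vanish_general (N L : ℕ) (hNodd : Odd N) :
    BplusNil N L ^ N = 0 ∧ BminusNil N L ^ N = 0 ∧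
    CplusNil N L ^ N = 0 ∧ CminusNil N L ^ N = 0 := by
  have hN : N ≠ 0 := hNodd.pos.ne'
  have hq : IsPrimitiveRoot (qR N) N := Complex.isPrimitiveRoot_exp N hN
  -- `N` odd is exactly what keeps `q²` primitive
  have hqsq : IsPrimitiveRoot (qR N ^ 2) N := hq.pow_of_coprime 2 (Nat.coprime_two_left.mpr hNodd)
  have hqinvsq : IsPrimitiveRoot ((qR N)⁻¹ ^ 2) N := by
    rw [inv_pow]
    exact hqsq.inv
  have hcomm := khalfMNil_commute_khalfNil (N := N)
  refine ⟨?_, ?_, ?_, ?_⟩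
  · exact smul_sum_smul_pow_eq_zero hN hqsq _ _ (stringOp (khalfMNil N) (fNil N) (khalfNil N))
      (fun _ _ => stringOp_mul_stringOp khalfMNil_mul_fNil fNil_mul_khalfNil hcomm)
      (stringOp_pow_eq_zero fNil_pow_eq_zero)
  · exact smul_sum_smul_pow_eq_zero hN hqinvsq _ _ (stringOp (khalfNil N) (fNil N) (khalfMNil N))
      (fun _ _ => stringOp_mul_stringOp khalfNil_mul_fNil fNil_mul_khalfMNil hcomm.symm)
      (stringOp_pow_eq_zero fNil_pow_eq_zero)
  · exact smul_sum_smul_pow_eq_zero hN hqsq _ _ (stringOp (khalfNil N) (eNil N) (khalfMNil N))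
      (fun _ _ => stringOp_mul_stringOp khalfNil_mul_eNil eNil_mul_khalfMNil hcomm.symm)
      (stringOp_pow_eq_zero eNil_pow_eq_zero)
  · exact smul_sum_smul_pow_eq_zero hN hqinvsq _ _ (stringOp (khalfMNil N) (eNil N) (khalfNil N))
      (fun _ _ => stringOp_mul_stringOp khalfMNil_mul_eNil eNil_mul_khalfNil hcomm)
      (stringOp_pow_eq_zero eNil_pow_eq_zero)

/-- at the root of unity `q = exp(2π√−1/N)` the `N`-th powers of
`B_±` and `C_±` vanish. -/
theorem Nth_powers_vanish (N L : ℕ) (hN : 3 ≤ N) (hNodd : Odd N) (hL : 1 ≤ L) :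
    BplusNil N L ^ N = 0 ∧ BminusNil N L ^ N = 0 ∧
    CplusNil N L ^ N = 0 ∧ CminusNil N L ^ N = 0 :=
  Nth_powers_vanish_general N L hNodd
end
end

section
/- The Onsager-algebra generators of the von Gehlen–Rittenberg Hamiltonian satisfy the Dolan–Grady conditions: [A_0, [A_0, [A_0, A_1]]] = 16 [A_0, A_1] and [A_1, [A_1, [A_1, A_0]]] = 16 [A_1, A_0]. -/
open scoped BigOperators Matrix

noncomputable section

/-- `ω := q²`. -/
def omegaR (N : ℕ) : ℂ := qR N ^ 2

/-- The Onsager-algebra generator `A₀ = (4/N) Σ_{i=1}^{L} Σ_{m=1}^{N−1} (1 − ω^{−m})⁻¹ Z_i^{2m}`. -/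
def A0op (N L : ℕ) : EndW N L :=
  (4 / (N : ℂ)) • ∑ i : Fin L, ∑ m ∈ Finset.Icc 1 (N - 1),
    (1 - (omegaR N ^ m)⁻¹)⁻¹ • siteOp i (Zmat N ^ (2 * m))

/-- The Onsager-algebra generator
`A₁ = (4/N) Σ_{i=1}^{L} Σ_{m=1}^{N−1} (1 − ω^{−m})⁻¹ X_i^{−m} X_{i+1}^{m}`, with the
periodic convention `X_{L+1} = X_1`. -/
def A1op (N L : ℕ) : EndW N L :=
  (4 / (N : ℂ)) • ∑ i : Fin L, ∑ m ∈ Finset.Icc 1 (N - 1),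
    (1 - (omegaR N ^ m)⁻¹)⁻¹ •
      tensorOp fun j =>
        if (j : ℕ) = (i : ℕ) then XmatInv N ^ m
        else if (j : ℕ) = ((i : ℕ) + 1) % L then Xmat N ^ m else 1

section Lemmas

variable {N : ℕ}

lemma pow_mod_eq {x : ℂ} {N : ℕ} (hx : x ^ N = 1) (a : ℕ) : x ^ a = x ^ (a % N) := by
  conv_lhs => rw [← Nat.div_add_mod a N]
  rw [pow_add, pow_mul, hx, one_pow, one_mul]

lemma hq_prim (hN : 3 ≤ N) : IsPrimitiveRoot (qR N) N := by
  have : (N : ℕ) ≠ 0 := by omega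
  simpa [qR] using Complex.isPrimitiveRoot_exp N this

lemma homega_prim (hN : 3 ≤ N) (hNodd : Odd N) : IsPrimitiveRoot (omegaR N) N := by
  have h2 : Nat.Coprime 2 N := Nat.coprime_two_left.mpr hNodd
  exact (hq_prim hN).pow_of_coprime 2 h2

lemma sum_pow_fin (hN : 3 ≤ N) (x : ℂ) (hx : x ^ N = 1) :
    ∑ a : Fin N, x ^ (a : ℕ) = if x = 1 then (N : ℂ) else 0 := by
  rw [Fin.sum_univ_eq_sum_range]
  split_ifs with h
  · simp [h]
  · rw [geom_sum_eq h, hx]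
    simp

end Lemmas

section KeySum

variable {N : ℕ}

lemma omega_pow_ne_one (hN : 3 ≤ N) (hNodd : Odd N) {m : ℕ} (hm : m ∈ Finset.Icc 1 (N-1)) :
    omegaR N ^ m ≠ 1 := by
  simp only [Finset.mem_Icc] at hm
  exact (homega_prim hN hNodd).pow_ne_one_of_pos_of_lt (by omega) (by omega)

lemma omega_ne_zero (hN : 3 ≤ N) (hNodd : Odd N) : omegaR N ≠ 0 := by
  intro h
  have h1 : omegaR N ^ N = 1 := (homega_prim hN hNodd).pow_eq_one
  rw [h, zero_pow (by omega)] at h1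
  exact zero_ne_one h1

lemma inv_aux {x : ℂ} (hx1 : x ≠ 1) : (1:ℂ) - x⁻¹ ≠ 0 := by
  intro h
  rw [sub_eq_zero, eq_comm, inv_eq_one] at h
  exact hx1 h

lemma coeff_mul {x : ℂ} (hx0 : x ≠ 0) (hx1 : x ≠ 1) : (1 - x⁻¹)⁻¹ * (x - 1) = x := by
  have h2 : (1:ℂ) - x⁻¹ ≠ 0 := inv_aux hx1
  linear_combination x * inv_mul_cancel₀ h2 + (1 - x⁻¹)⁻¹ * mul_inv_cancel₀ hx0

lemma pair_id {x : ℂ} (hx0 : x ≠ 0) (hx1 : x ≠ 1) : (1 - x⁻¹)⁻¹ + (1 - x)⁻¹ = 1 := by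
  have h1 : (1:ℂ) - x ≠ 0 := sub_ne_zero.mpr fun h => hx1 h.symm
  apply mul_right_cancel₀ (sub_ne_zero.mpr hx1 : x - 1 ≠ 0)
  linear_combination coeff_mul hx0 hx1 - inv_mul_cancel₀ h1

lemma range_eq_insert_Icc (hN : 3 ≤ N) :
    Finset.range N = insert 0 (Finset.Icc 1 (N-1)) := by
  ext a
  simp only [Finset.mem_range, Finset.mem_insert, Finset.mem_Icc]
  omega

lemma sum_S0 (hN : 3 ≤ N) (hNodd : Odd N) :
    ∑ m ∈ Finset.Icc 1 (N-1), (1 - (omegaR N ^ m)⁻¹)⁻¹ = ((N:ℂ)-1)/2 := by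
  set ζ := omegaR N with hζdef
  have hrev : ∑ m ∈ Finset.Icc 1 (N-1), (1 - (ζ ^ m)⁻¹)⁻¹
      = ∑ m ∈ Finset.Icc 1 (N-1), (1 - (ζ ^ (N - m))⁻¹)⁻¹ := by
    refine Finset.sum_nbij' (fun m => N - m) (fun m => N - m) ?_ ?_ ?_ ?_ ?_ <;>
      intro a ha <;> simp only [Finset.mem_Icc] at ha ⊢
    · omega
    · omega
    · omega
    · omega
    · have : N - (N - a) = a := by omega
      rw [this]
  have hpair : ∀ m ∈ Finset.Icc 1 (N-1),
      (1 - (ζ ^ m)⁻¹)⁻¹ + (1 - (ζ ^ (N - m))⁻¹)⁻¹ = 1 := by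
    intro m hm
    have hmm := hm
    simp only [Finset.mem_Icc] at hmm
    have h0 : ζ ^ m ≠ 0 := pow_ne_zero _ (omega_ne_zero hN hNodd)
    have h1 : ζ ^ m ≠ 1 := omega_pow_ne_one hN hNodd hm
    have hmul : ζ ^ (N - m) * ζ ^ m = 1 := by
      rw [← pow_add]
      have he : N - m + m = N := by omega
      rw [he]
      exact (homega_prim hN hNodd).pow_eq_one
    have hinv : (ζ ^ (N - m))⁻¹ = ζ ^ m := inv_eq_of_mul_eq_one_right hmul
    rw [hinv]
    exact pair_id h0 h1
  have hsum2 : (∑ m ∈ Finset.Icc 1 (N-1), (1 - (ζ ^ m)⁻¹)⁻¹)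
      + (∑ m ∈ Finset.Icc 1 (N-1), (1 - (ζ ^ m)⁻¹)⁻¹) = (N:ℂ) - 1 := by
    nth_rewrite 2 [hrev]
    rw [← Finset.sum_add_distrib, Finset.sum_congr rfl hpair]
    rw [Finset.sum_const, Nat.card_Icc]
    have he : N - 1 + 1 - 1 = N - 1 := by omega
    rw [he, nsmul_eq_mul, mul_one, Nat.cast_sub (by omega : 1 ≤ N)]
    push_cast
    ring
  linear_combination hsum2 / 2

lemma key_sum (hN : 3 ≤ N) (hNodd : Odd N) (k : ℕ) (hk : k < N) :
    ∑ m ∈ Finset.Icc 1 (N-1), (1 - (omegaR N ^ m)⁻¹)⁻¹ * (omegaR N ^ m) ^ k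
      = ((N:ℂ)-1)/2 - k := by
  induction k with
  | zero => simpa using sum_S0 hN hNodd
  | succ k ih =>
    have hk' : k < N := by omega
    have hstep : ∑ m ∈ Finset.Icc 1 (N-1), (1 - (omegaR N ^ m)⁻¹)⁻¹ * (omegaR N ^ m) ^ (k+1)
        = (∑ m ∈ Finset.Icc 1 (N-1), (1 - (omegaR N ^ m)⁻¹)⁻¹ * (omegaR N ^ m) ^ k)
          + ∑ m ∈ Finset.Icc 1 (N-1), (omegaR N ^ (k+1)) ^ m := by
      rw [← Finset.sum_add_distrib]
      apply Finset.sum_congr rfl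
      intro m hm
      have h0 : omegaR N ^ m ≠ 0 := pow_ne_zero _ (omega_ne_zero hN hNodd)
      have h1 : omegaR N ^ m ≠ 1 := omega_pow_ne_one hN hNodd hm
      have hcomm : (omegaR N ^ (k+1)) ^ m = (omegaR N ^ m) ^ (k+1) := by
        rw [← pow_mul, ← pow_mul, Nat.mul_comm]
      rw [hcomm]
      linear_combination ((omegaR N ^ m) ^ k) * coeff_mul h0 h1
    have hgeom : ∑ m ∈ Finset.Icc 1 (N-1), (omegaR N ^ (k+1)) ^ m = -1 := by
      have hx : (omegaR N ^ (k+1)) ^ N = 1 := by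
        rw [← pow_mul, Nat.mul_comm, pow_mul, (homega_prim hN hNodd).pow_eq_one, one_pow]
      have hx1 : omegaR N ^ (k+1) ≠ 1 :=
        (homega_prim hN hNodd).pow_ne_one_of_pos_of_lt (by omega) (by omega)
      have hfin := sum_pow_fin hN (omegaR N ^ (k+1)) hx
      rw [Fin.sum_univ_eq_sum_range, range_eq_insert_Icc hN,
        Finset.sum_insert (by simp)] at hfin
      simp only [pow_zero, if_neg hx1] at hfin
      linear_combination hfin
    rw [hstep, ih hk', hgeom]
    push_cast
    ring

end KeySum

section DG1

variable {N L : ℕ}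

/-- Eigenvalue function of `A₀`. -/
def dvec (N L : ℕ) (σ : Fin L → Fin N) : ℂ :=
  (4 / (N:ℂ)) * ∑ i, (((N:ℂ)-1)/2 - ((σ i : ℕ) : ℂ))

lemma Zmat_pow_diag (N m : ℕ) :
    Zmat N ^ m = Matrix.diagonal (fun s : Fin N => (qR N ^ (s:ℕ)) ^ m) := by
  rw [Zmat, Matrix.diagonal_pow]
  rfl

lemma qpow_omega (hN : 3 ≤ N) (s m : ℕ) :
    (qR N ^ s) ^ (2 * m) = (omegaR N ^ m) ^ s := by
  rw [omegaR, ← pow_mul, ← pow_mul, ← pow_mul]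
  congr 1
  ring

lemma A0_diag (hN : 3 ≤ N) (hNodd : Odd N) : A0op N L = Matrix.diagonal (dvec N L) := by
  ext σ τ
  rw [A0op]
  simp only [Matrix.smul_apply, Matrix.sum_apply, smul_eq_mul]
  by_cases hστ : σ = τ
  · subst hστ
    rw [Matrix.diagonal_apply_eq]
    have hsite : ∀ (i : Fin L) (m : ℕ),
        siteOp i (Zmat N ^ (2*m)) σ σ = ((omegaR N) ^ m) ^ ((σ i : ℕ)) := by
      intro i m
      rw [siteOp, tensorOp]
      simp only [Matrix.of_apply]
      rw [Finset.prod_eq_single i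
        (fun j _ hj => by rw [if_neg hj, Matrix.one_apply_eq])
        (fun h => absurd (Finset.mem_univ i) h)]
      rw [if_pos rfl, Zmat_pow_diag, Matrix.diagonal_apply_eq, qpow_omega hN]
    simp_rw [hsite]
    rw [dvec]
    congr 1
    exact Finset.sum_congr rfl fun i _ => key_sum hN hNodd (σ i) (σ i).isLt
  · rw [Matrix.diagonal_apply_ne _ hστ]
    obtain ⟨j, hj⟩ : ∃ j, σ j ≠ τ j := by
      by_contra hc; push_neg at hc; exact hστ (funext hc)
    have hz : ∀ (i : Fin L) (m : ℕ), siteOp i (Zmat N ^ (2*m)) σ τ = 0 := by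
      intro i m
      rw [siteOp, tensorOp]
      simp only [Matrix.of_apply]
      apply Finset.prod_eq_zero (Finset.mem_univ j)
      by_cases hji : j = i
      · rw [if_pos hji, Zmat_pow_diag, Matrix.diagonal_apply_ne _ hj]
      · rw [if_neg hji, Matrix.one_apply_ne hj]
    simp_rw [hz]
    simp

lemma dg_aux {n : Type*} [Fintype n] [DecidableEq n] (d : n → ℂ) (B : Matrix n n ℂ)
    (h : ∀ σ τ, B σ τ ≠ 0 → (d σ - d τ)^3 = 16 * (d σ - d τ)) :
    Matrix.diagonal d * (Matrix.diagonal d * (Matrix.diagonal d * B - B * Matrix.diagonal d) -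
        (Matrix.diagonal d * B - B * Matrix.diagonal d) * Matrix.diagonal d) -
      (Matrix.diagonal d * (Matrix.diagonal d * B - B * Matrix.diagonal d) -
        (Matrix.diagonal d * B - B * Matrix.diagonal d) * Matrix.diagonal d) * Matrix.diagonal d
    = (16:ℂ) • (Matrix.diagonal d * B - B * Matrix.diagonal d) := by
  ext σ τ
  simp only [Matrix.sub_apply, Matrix.smul_apply, Matrix.diagonal_mul, Matrix.mul_diagonal,
    smul_eq_mul]
  by_cases hB : B σ τ = 0
  · rw [hB]; ring
  · linear_combination (B σ τ) * (h σ τ hB)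

lemma Xmat_pow_rel (m : ℕ) : ∀ (ρ σ : Fin N), (Xmat N ^ m) ρ σ ≠ 0 →
    ((ρ:ℕ) : ZMod N) = ((σ:ℕ) : ZMod N) + m := by
  induction m with
  | zero =>
    intro ρ σ h
    have : ρ = σ := by
      by_contra hc
      rw [pow_zero, Matrix.one_apply_ne hc] at h
      exact h rfl
    subst this; simp
  | succ m ih =>
    intro ρ σ h
    rw [pow_succ, Matrix.mul_apply] at h
    obtain ⟨a, -, ha⟩ := Finset.exists_ne_zero_of_sum_ne_zero h
    have h1 : (Xmat N ^ m) ρ a ≠ 0 := fun hc => ha (by rw [hc, zero_mul])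
    have h2 : Xmat N a σ ≠ 0 := fun hc => ha (by rw [hc, mul_zero])
    have ha' : ((a:ℕ)) = ((σ:ℕ) + 1) % N := by
      by_contra hc
      rw [Xmat, Matrix.of_apply, if_neg hc] at h2
      exact h2 rfl
    have hZ : ((a:ℕ) : ZMod N) = ((σ:ℕ) : ZMod N) + 1 := by
      rw [ha', ZMod.natCast_mod]; push_cast; ring
    rw [ih ρ a h1, hZ]
    push_cast
    ring

lemma XmatInv_pow_rel (m : ℕ) : ∀ (ρ σ : Fin N), (XmatInv N ^ m) ρ σ ≠ 0 →
    ((ρ:ℕ) : ZMod N) + m = ((σ:ℕ) : ZMod N) := by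
  induction m with
  | zero =>
    intro ρ σ h
    have : ρ = σ := by
      by_contra hc
      rw [pow_zero, Matrix.one_apply_ne hc] at h
      exact h rfl
    subst this; simp
  | succ m ih =>
    intro ρ σ h
    rw [pow_succ, Matrix.mul_apply] at h
    obtain ⟨a, -, ha⟩ := Finset.exists_ne_zero_of_sum_ne_zero h
    have h1 : (XmatInv N ^ m) ρ a ≠ 0 := fun hc => ha (by rw [hc, zero_mul])
    have h2 : XmatInv N a σ ≠ 0 := fun hc => ha (by rw [hc, mul_zero])
    have ha' : ((a:ℕ) + 1) % N = (σ:ℕ) := by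
      by_contra hc
      rw [XmatInv, Matrix.of_apply, if_neg hc] at h2
      exact h2 rfl
    have hZ : ((a:ℕ) : ZMod N) + 1 = ((σ:ℕ) : ZMod N) := by
      rw [← ha', ZMod.natCast_mod]; push_cast; ring
    rw [← hZ, ← ih ρ a h1]
    push_cast
    ring

/-- From two mod-`N` shift relations and strict bounds, deduce the cube identity. -/
lemma gap_arith (hN : 3 ≤ N) {g : ℂ} {u v : ℤ} {m : ℕ}
    (hu : (N:ℤ) ∣ (u - m)) (hv : (N:ℤ) ∣ (v + m))
    (hub : -(N:ℤ) < u ∧ u < N) (hvb : -(N:ℤ) < v ∧ v < N)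
    (hg : g = (4 / (N:ℂ)) * ((u + v : ℤ) : ℂ)) :
    g ^ 3 = 16 * g := by
  have hNd : (N:ℤ) ∣ (u + v) := by
    have := Dvd.dvd.add hu hv
    have he : (u - m) + (v + m) = u + v := by ring
    rwa [he] at this
  obtain ⟨c, hc⟩ := hNd
  have hNpos : (0:ℤ) < N := by omega
  have hc1 : -2 < c := by nlinarith
  have hc2 : c < 2 := by nlinarith
  have hNC : ((N:ℂ)) ≠ 0 := by
    simp only [ne_eq, Nat.cast_eq_zero]; omega
  have hgc : g = 4 * (c:ℂ) := by
    rw [hg, hc]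
    push_cast
    field_simp
  interval_cases c <;> rw [hgc] <;> norm_num

end DG1

section Gap1

variable {N L : ℕ}

lemma fin_succ_ne {L : ℕ} (hL : 2 ≤ L) (i : Fin L) (i' : Fin L)
    (hi' : (i':ℕ) = ((i:ℕ) + 1) % L) : i' ≠ i := by
  intro hc
  have hv : ((i:ℕ) + 1) % L = (i:ℕ) := by rw [← hi', hc]
  have hiL := i.isLt
  by_cases hc2 : (i:ℕ) + 1 < L
  · rw [Nat.mod_eq_of_lt hc2] at hv
    omega
  · have he : (i:ℕ) + 1 = L := by omega
    rw [he, Nat.mod_self] at hv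
    omega

lemma dvec_sub (σ τ : Fin L → Fin N) :
    dvec N L σ - dvec N L τ = (4 / (N:ℂ)) * ∑ j, (((τ j : ℕ) : ℂ) - ((σ j : ℕ) : ℂ)) := by
  rw [dvec, dvec, ← mul_sub, ← Finset.sum_sub_distrib]
  congr 1
  exact Finset.sum_congr rfl fun j _ => by ring

lemma sum_two_sites {f : Fin L → ℂ} (i i' : Fin L) (hne : i ≠ i')
    (hz : ∀ j, j ≠ i → j ≠ i' → f j = 0) : ∑ j, f j = f i + f i' := by
  rw [← Finset.sum_subset (Finset.subset_univ ({i, i'} : Finset (Fin L)))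
    (fun x _ hx => by
      simp only [Finset.mem_insert, Finset.mem_singleton] at hx
      push_neg at hx
      exact hz x hx.1 hx.2)]
  exact Finset.sum_pair hne

lemma gap1 (hN : 3 ≤ N) (hNodd : Odd N) (hL : 2 ≤ L) (σ τ : Fin L → Fin N)
    (h : A1op N L σ τ ≠ 0) :
    (dvec N L σ - dvec N L τ)^3 = 16 * (dvec N L σ - dvec N L τ) := by
  rw [A1op] at h
  simp only [Matrix.smul_apply, Matrix.sum_apply, smul_eq_mul] at h
  have hsum : (∑ i : Fin L, ∑ m ∈ Finset.Icc 1 (N-1), (1 - (omegaR N ^ m)⁻¹)⁻¹ *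
      (tensorOp fun j =>
        if (j : ℕ) = (i : ℕ) then XmatInv N ^ m
        else if (j : ℕ) = ((i : ℕ) + 1) % L then Xmat N ^ m else 1) σ τ) ≠ 0 := by
    intro h0
    exact h (by rw [h0, mul_zero])
  obtain ⟨i, -, hi⟩ := Finset.exists_ne_zero_of_sum_ne_zero hsum
  obtain ⟨m, hm, him⟩ := Finset.exists_ne_zero_of_sum_ne_zero hi
  have ht : (tensorOp fun j =>
      if (j : ℕ) = (i : ℕ) then XmatInv N ^ m
      else if (j : ℕ) = ((i : ℕ) + 1) % L then Xmat N ^ m else 1) σ τ ≠ 0 :=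
    fun hc => him (by rw [hc, mul_zero])
  rw [tensorOp, Matrix.of_apply] at ht
  have hfac := Finset.prod_ne_zero_iff.mp ht
  set i' : Fin L := ⟨((i:ℕ) + 1) % L, Nat.mod_lt _ (by omega)⟩ with hi'def
  have hi'val : (i' : ℕ) = ((i:ℕ) + 1) % L := rfl
  have hne : i' ≠ i := fin_succ_ne hL i i' hi'val
  -- site i
  have hXi : (XmatInv N ^ m) (σ i) (τ i) ≠ 0 := by
    have := hfac i (Finset.mem_univ i)
    rwa [if_pos rfl] at this
  -- site i'
  have hXi' : (Xmat N ^ m) (σ i') (τ i') ≠ 0 := by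
    have := hfac i' (Finset.mem_univ i')
    rw [if_neg (by rw [hi'val]; exact fun hc => hne (Fin.ext hc)), if_pos hi'val] at this
    exact this
  -- other sites
  have hother : ∀ j, j ≠ i → j ≠ i' → σ j = τ j := by
    intro j hji hji'
    have := hfac j (Finset.mem_univ j)
    rw [if_neg (fun hc => hji (Fin.ext hc)),
        if_neg (fun hc => hji' (Fin.ext (by rw [hc, hi'val])))] at this
    by_contra hc
    rw [Matrix.one_apply_ne hc] at this
    exact this rfl
  -- mod relations
  have rel1 := XmatInv_pow_rel m (σ i) (τ i) hXi
  have rel2 := Xmat_pow_rel m (σ i') (τ i') hXi'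
  have hu : (N:ℤ) ∣ ((((τ i : ℕ) : ℤ) - ((σ i : ℕ) : ℤ)) - m) := by
    rw [← ZMod.intCast_zmod_eq_zero_iff_dvd]
    push_cast
    linear_combination -rel1
  have hv : (N:ℤ) ∣ ((((τ i' : ℕ) : ℤ) - ((σ i' : ℕ) : ℤ)) + m) := by
    rw [← ZMod.intCast_zmod_eq_zero_iff_dvd]
    push_cast
    linear_combination -rel2
  have hub : -(N:ℤ) < (((τ i : ℕ) : ℤ) - ((σ i : ℕ) : ℤ)) ∧ (((τ i : ℕ) : ℤ) - ((σ i : ℕ) : ℤ)) < N := by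
    constructor <;>
    · have h1 : ((τ i : ℕ) : ℤ) < N := by exact_mod_cast (τ i).isLt
      have h2 : ((σ i : ℕ) : ℤ) < N := by exact_mod_cast (σ i).isLt
      omega
  have hvb : -(N:ℤ) < (((τ i' : ℕ) : ℤ) - ((σ i' : ℕ) : ℤ)) ∧ (((τ i' : ℕ) : ℤ) - ((σ i' : ℕ) : ℤ)) < N := by
    constructor <;>
    · have h1 : ((τ i' : ℕ) : ℤ) < N := by exact_mod_cast (τ i').isLt
      have h2 : ((σ i' : ℕ) : ℤ) < N := by exact_mod_cast (σ i').isLt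
      omega
  apply gap_arith hN hu hv hub hvb
  rw [dvec_sub]
  congr 1
  rw [sum_two_sites i i' (Ne.symm hne) (fun j hji hji' => by rw [hother j hji hji']; ring)]
  push_cast
  ring

end Gap1

section Fourier

variable {N L : ℕ}

lemma q_ne_zero (hN : 3 ≤ N) : qR N ≠ 0 := by
  intro h
  have h1 : qR N ^ N = 1 := (hq_prim hN).pow_eq_one
  rw [h, zero_pow (by omega)] at h1
  exact zero_ne_one h1

lemma qN_one (hN : 3 ≤ N) : qR N ^ N = 1 := (hq_prim hN).pow_eq_one

lemma qpowN (hN : 3 ≤ N) (s : ℕ) : (qR N ^ s) ^ N = 1 := by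
  rw [← pow_mul, mul_comm, pow_mul, qN_one hN, one_pow]

/-- The (unnormalized) discrete Fourier matrix. -/
def Pmat (N : ℕ) : Matrix (Fin N) (Fin N) ℂ :=
  Matrix.of fun j k => qR N ^ ((j:ℕ) * (k:ℕ))

/-- The inverse discrete Fourier matrix. -/
def Qmat (N : ℕ) : Matrix (Fin N) (Fin N) ℂ :=
  Matrix.of fun j k => (N:ℂ)⁻¹ * (qR N ^ ((j:ℕ) * (k:ℕ)))⁻¹

lemma qpow_eq_iff (hN : 3 ≤ N) {j k : Fin N} :
    qR N ^ (j:ℕ) = qR N ^ (k:ℕ) ↔ j = k := by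
  constructor
  · intro h
    exact Fin.ext ((hq_prim hN).pow_inj j.isLt k.isLt h)
  · rintro rfl; rfl

lemma NC_ne_zero (hN : 3 ≤ N) : ((N:ℂ)) ≠ 0 := by
  simp only [ne_eq, Nat.cast_eq_zero]; omega

lemma PQ_one (hN : 3 ≤ N) : Pmat N * Qmat N = 1 := by
  ext j k
  rw [Matrix.mul_apply, Matrix.one_apply]
  have hterm : ∀ a : Fin N, Pmat N j a * Qmat N a k
      = (N:ℂ)⁻¹ * ((qR N ^ (j:ℕ)) * (qR N ^ (k:ℕ))⁻¹) ^ (a:ℕ) := by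
    intro a
    rw [Pmat, Qmat, Matrix.of_apply, Matrix.of_apply, pow_mul,
      (by rw [mul_comm] : (a:ℕ) * (k:ℕ) = (k:ℕ) * (a:ℕ)), pow_mul, mul_pow, inv_pow]
    ring
  rw [Finset.sum_congr rfl (fun a _ => hterm a), ← Finset.mul_sum]
  have hx : ((qR N ^ (j:ℕ)) * (qR N ^ (k:ℕ))⁻¹) ^ N = 1 := by
    rw [mul_pow, inv_pow, qpowN hN, qpowN hN, inv_one, mul_one]
  rw [sum_pow_fin hN _ hx]
  have hcond : ((qR N ^ (j:ℕ)) * (qR N ^ (k:ℕ))⁻¹ = 1) ↔ j = k := by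
    rw [mul_inv_eq_one₀ (pow_ne_zero _ (q_ne_zero hN)), qpow_eq_iff hN]
  by_cases h : j = k
  · rw [if_pos (hcond.mpr h), if_pos h, inv_mul_cancel₀ (NC_ne_zero hN)]
  · rw [if_neg (fun hc => h (hcond.mp hc)), if_neg h, mul_zero]

lemma QP_one (hN : 3 ≤ N) : Qmat N * Pmat N = 1 := by
  ext j k
  rw [Matrix.mul_apply, Matrix.one_apply]
  have hterm : ∀ a : Fin N, Qmat N j a * Pmat N a k
      = (N:ℂ)⁻¹ * ((qR N ^ (j:ℕ))⁻¹ * (qR N ^ (k:ℕ))) ^ (a:ℕ) := by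
    intro a
    rw [Pmat, Qmat, Matrix.of_apply, Matrix.of_apply, pow_mul,
      (by rw [mul_comm] : (a:ℕ) * (k:ℕ) = (k:ℕ) * (a:ℕ)), pow_mul, mul_pow, inv_pow]
    ring
  rw [Finset.sum_congr rfl (fun a _ => hterm a), ← Finset.mul_sum]
  have hx : ((qR N ^ (j:ℕ))⁻¹ * (qR N ^ (k:ℕ))) ^ N = 1 := by
    rw [mul_pow, inv_pow, qpowN hN, qpowN hN, inv_one, one_mul]
  rw [sum_pow_fin hN _ hx]
  have hcond : ((qR N ^ (j:ℕ))⁻¹ * (qR N ^ (k:ℕ)) = 1) ↔ j = k := by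
    rw [mul_comm, mul_inv_eq_one₀ (pow_ne_zero _ (q_ne_zero hN)), qpow_eq_iff hN]
    exact eq_comm
  by_cases h : j = k
  · rw [if_pos (hcond.mpr h), if_pos h, inv_mul_cancel₀ (NC_ne_zero hN)]
  · rw [if_neg (fun hc => h (hcond.mp hc)), if_neg h, mul_zero]

lemma sum_ite_val {f : Fin N → ℂ} (c : ℕ) (hc : c < N) :
    ∑ b : Fin N, f b * (if (b:ℕ) = c then (1:ℂ) else 0) = f ⟨c, hc⟩ := by
  rw [Finset.sum_eq_single (⟨c, hc⟩ : Fin N)]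
  · rw [if_pos rfl, mul_one]
  · intro b _ hb
    rw [if_neg (fun hv => hb (Fin.ext hv)), mul_zero]
  · intro h; exact absurd (Finset.mem_univ _) h

lemma sum_ite_val' {g : Fin N → ℂ} (c : ℕ) (hc : c < N) :
    ∑ a : Fin N, (if c = (a:ℕ) then (1:ℂ) else 0) * g a = g ⟨c, hc⟩ := by
  rw [Finset.sum_eq_single (⟨c, hc⟩ : Fin N)]
  · rw [if_pos rfl, one_mul]
  · intro b _ hb
    rw [if_neg (fun hv => hb (Fin.ext hv.symm)), zero_mul]
  · intro h; exact absurd (Finset.mem_univ _) h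

lemma conj_Z (hN : 3 ≤ N) : Qmat N * Zmat N * Pmat N = Xmat N := by
  ext j k
  rw [Matrix.mul_apply]
  have hterm : ∀ a : Fin N, (Qmat N * Zmat N) j a * Pmat N a k
      = (N:ℂ)⁻¹ * ((qR N ^ (j:ℕ))⁻¹ * (qR N ^ ((k:ℕ)+1))) ^ (a:ℕ) := by
    intro a
    rw [Zmat, Matrix.mul_diagonal, Qmat, Pmat, Matrix.of_apply, Matrix.of_apply, pow_mul,
      (by rw [mul_comm] : (a:ℕ) * (k:ℕ) = (k:ℕ) * (a:ℕ)), pow_mul]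
    ring
  rw [Finset.sum_congr rfl (fun a _ => hterm a), ← Finset.mul_sum]
  have hx : ((qR N ^ (j:ℕ))⁻¹ * (qR N ^ ((k:ℕ)+1))) ^ N = 1 := by
    rw [mul_pow, inv_pow, qpowN hN, qpowN hN, inv_one, one_mul]
  rw [sum_pow_fin hN _ hx]
  have hcond : ((qR N ^ (j:ℕ))⁻¹ * (qR N ^ ((k:ℕ)+1)) = 1) ↔ (j:ℕ) = ((k:ℕ)+1) % N := by
    rw [mul_comm, mul_inv_eq_one₀ (pow_ne_zero _ (q_ne_zero hN)),
      pow_mod_eq (qN_one hN) ((k:ℕ)+1)]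
    constructor
    · intro h
      exact ((hq_prim hN).pow_inj (Nat.mod_lt _ (by omega)) j.isLt h).symm
    · intro h; rw [h]
  rw [Xmat, Matrix.of_apply]
  by_cases h : (j:ℕ) = ((k:ℕ)+1) % N
  · rw [if_pos (hcond.mpr h), if_pos h, inv_mul_cancel₀ (NC_ne_zero hN)]
  · rw [if_neg (fun hc => h (hcond.mp hc)), if_neg h, mul_zero]

lemma conj_X (hN : 3 ≤ N) :
    Qmat N * Xmat N * Pmat N = Matrix.diagonal (fun j : Fin N => (qR N ^ (j:ℕ))⁻¹) := by
  ext j k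
  have hQX : ∀ a : Fin N, (Qmat N * Xmat N) j a
      = (N:ℂ)⁻¹ * ((qR N ^ (j:ℕ)) ^ ((a:ℕ)+1))⁻¹ := by
    intro a
    rw [Matrix.mul_apply]
    have : ∀ b : Fin N, Qmat N j b * Xmat N b a
        = ((N:ℂ)⁻¹ * ((qR N ^ (j:ℕ)) ^ (b:ℕ))⁻¹) * (if (b:ℕ) = ((a:ℕ)+1) % N then 1 else 0) := by
      intro b
      rw [Qmat, Xmat, Matrix.of_apply, Matrix.of_apply, pow_mul]
    rw [Finset.sum_congr rfl (fun b _ => this b),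
      sum_ite_val (((a:ℕ)+1) % N) (Nat.mod_lt _ (by omega))]
    rw [← pow_mod_eq (qpowN hN (j:ℕ)) ((a:ℕ)+1)]
  rw [Matrix.mul_apply, Finset.sum_congr rfl (fun a _ => by rw [hQX a])]
  have hterm : ∀ a : Fin N, (N:ℂ)⁻¹ * ((qR N ^ (j:ℕ)) ^ ((a:ℕ)+1))⁻¹ * Pmat N a k
      = ((N:ℂ)⁻¹ * (qR N ^ (j:ℕ))⁻¹) * ((qR N ^ (j:ℕ))⁻¹ * (qR N ^ (k:ℕ))) ^ (a:ℕ) := by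
    intro a
    rw [Pmat, Matrix.of_apply, (by rw [mul_comm] : (a:ℕ) * (k:ℕ) = (k:ℕ) * (a:ℕ)), pow_mul]
    ring
  rw [Finset.sum_congr rfl (fun a _ => hterm a), ← Finset.mul_sum]
  have hx : ((qR N ^ (j:ℕ))⁻¹ * (qR N ^ (k:ℕ))) ^ N = 1 := by
    rw [mul_pow, inv_pow, qpowN hN, qpowN hN, inv_one, one_mul]
  rw [sum_pow_fin hN _ hx]
  have hcond : ((qR N ^ (j:ℕ))⁻¹ * (qR N ^ (k:ℕ)) = 1) ↔ j = k := by
    rw [mul_comm, mul_inv_eq_one₀ (pow_ne_zero _ (q_ne_zero hN)), qpow_eq_iff hN]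
    exact eq_comm
  by_cases h : j = k
  · rw [if_pos (hcond.mpr h), Matrix.diagonal_apply, if_pos h]
    subst h
    rw [mul_comm ((N:ℂ))⁻¹, mul_assoc, inv_mul_cancel₀ (NC_ne_zero hN), mul_one]
  · rw [if_neg (fun hc => h (hcond.mp hc)), Matrix.diagonal_apply, if_neg h, mul_zero]

lemma conj_Xinv (hN : 3 ≤ N) :
    Qmat N * XmatInv N * Pmat N = Matrix.diagonal (fun j : Fin N => qR N ^ (j:ℕ)) := by
  rw [Matrix.mul_assoc]
  ext j k
  have hXP : ∀ b : Fin N, (XmatInv N * Pmat N) b k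
      = (qR N ^ (k:ℕ)) ^ ((b:ℕ)+1) := by
    intro b
    rw [Matrix.mul_apply]
    have : ∀ a : Fin N, XmatInv N b a * Pmat N a k
        = (if ((b:ℕ)+1) % N = (a:ℕ) then 1 else 0) * ((qR N ^ (k:ℕ)) ^ (a:ℕ)) := by
      intro a
      rw [XmatInv, Pmat, Matrix.of_apply, Matrix.of_apply,
        (by rw [mul_comm] : (a:ℕ) * (k:ℕ) = (k:ℕ) * (a:ℕ)), pow_mul]
    rw [Finset.sum_congr rfl (fun a _ => this a),
      sum_ite_val' (((b:ℕ)+1) % N) (Nat.mod_lt _ (by omega))]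
    rw [← pow_mod_eq (qpowN hN (k:ℕ)) ((b:ℕ)+1)]
  rw [Matrix.mul_apply, Finset.sum_congr rfl (fun b _ => by rw [hXP b])]
  have hterm : ∀ b : Fin N, Qmat N j b * (qR N ^ (k:ℕ)) ^ ((b:ℕ)+1)
      = ((N:ℂ)⁻¹ * (qR N ^ (k:ℕ))) * ((qR N ^ (j:ℕ))⁻¹ * (qR N ^ (k:ℕ))) ^ (b:ℕ) := by
    intro b
    rw [Qmat, Matrix.of_apply, pow_mul]
    ring
  rw [Finset.sum_congr rfl (fun b _ => hterm b), ← Finset.mul_sum]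
  have hx : ((qR N ^ (j:ℕ))⁻¹ * (qR N ^ (k:ℕ))) ^ N = 1 := by
    rw [mul_pow, inv_pow, qpowN hN, qpowN hN, inv_one, one_mul]
  rw [sum_pow_fin hN _ hx]
  have hcond : ((qR N ^ (j:ℕ))⁻¹ * (qR N ^ (k:ℕ)) = 1) ↔ j = k := by
    rw [mul_comm, mul_inv_eq_one₀ (pow_ne_zero _ (q_ne_zero hN)), qpow_eq_iff hN]
    exact eq_comm
  by_cases h : j = k
  · rw [if_pos (hcond.mpr h), Matrix.diagonal_apply, if_pos h]
    subst h
    rw [mul_comm ((N:ℂ)⁻¹), mul_assoc, inv_mul_cancel₀ (NC_ne_zero hN), mul_one]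
  · rw [if_neg (fun hc => h (hcond.mp hc)), Matrix.diagonal_apply, if_neg h, mul_zero]

lemma matConj_mul {n : Type*} [Fintype n] [DecidableEq n] {P Q : Matrix n n ℂ}
    (hPQ : P * Q = 1) (X Y : Matrix n n ℂ) :
    (Q * X * P) * (Q * Y * P) = Q * (X * Y) * P := by
  have h1 : (Q * X * P) * (Q * Y * P) = Q * X * (P * Q) * Y * P := by
    noncomm_ring
  rw [h1, hPQ, Matrix.mul_one]
  noncomm_ring

lemma matConj_pow {n : Type*} [Fintype n] [DecidableEq n] {P Q : Matrix n n ℂ}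
    (hPQ : P * Q = 1) (hQP : Q * P = 1) (X : Matrix n n ℂ) (m : ℕ) :
    Q * (X ^ m) * P = (Q * X * P) ^ m := by
  induction m with
  | zero => rw [pow_zero, pow_zero, Matrix.mul_one, hQP]
  | succ m ih => rw [pow_succ, pow_succ, ← ih, matConj_mul hPQ]

end Fourier

section TensorConj

variable {N L : ℕ}

lemma tensor_mul (M M' : Fin L → Matrix (Fin N) (Fin N) ℂ) :
    tensorOp M * tensorOp M' = tensorOp (fun i => M i * M' i) := by
  ext σ τ
  rw [Matrix.mul_apply]
  simp only [tensorOp, Matrix.of_apply, Matrix.mul_apply]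
  rw [Fintype.prod_sum]
  exact Finset.sum_congr rfl fun ρ _ => Finset.prod_mul_distrib.symm

lemma tensor_one : tensorOp (fun _ : Fin L => (1 : Matrix (Fin N) (Fin N) ℂ)) = 1 := by
  ext σ τ
  rw [tensorOp, Matrix.of_apply]
  by_cases h : σ = τ
  · subst h
    rw [Matrix.one_apply_eq]
    exact Finset.prod_eq_one fun j _ => Matrix.one_apply_eq _
  · rw [Matrix.one_apply_ne h]
    obtain ⟨j, hj⟩ : ∃ j, σ j ≠ τ j := by
      by_contra hc; push_neg at hc; exact h (funext hc)
    exact Finset.prod_eq_zero (Finset.mem_univ j) (Matrix.one_apply_ne hj)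

lemma tensor_diag (g : Fin L → Fin N → ℂ) :
    tensorOp (fun j => Matrix.diagonal (g j))
      = Matrix.diagonal (fun σ : Fin L → Fin N => ∏ j, g j (σ j)) := by
  ext σ τ
  rw [tensorOp, Matrix.of_apply]
  by_cases h : σ = τ
  · subst h
    rw [Matrix.diagonal_apply_eq]
    exact Finset.prod_congr rfl fun j _ => Matrix.diagonal_apply_eq _ _
  · rw [Matrix.diagonal_apply_ne _ h]
    obtain ⟨j, hj⟩ : ∃ j, σ j ≠ τ j := by
      by_contra hc; push_neg at hc; exact h (funext hc)
    exact Finset.prod_eq_zero (Finset.mem_univ j) (Matrix.diagonal_apply_ne _ hj)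

/-- Tensor Fourier transform. -/
def Umat (N L : ℕ) : EndW N L := tensorOp fun _ => Pmat N

/-- Inverse tensor Fourier transform. -/
def Vmat (N L : ℕ) : EndW N L := tensorOp fun _ => Qmat N

lemma UV_one (hN : 3 ≤ N) : Umat N L * Vmat N L = 1 := by
  rw [Umat, Vmat, tensor_mul]
  have h : (fun _ : Fin L => Pmat N * Qmat N) = fun _ => (1 : Matrix (Fin N) (Fin N) ℂ) :=
    funext fun _ => PQ_one hN
  rw [h, tensor_one]

lemma VU_one (hN : 3 ≤ N) : Vmat N L * Umat N L = 1 := by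
  rw [Umat, Vmat, tensor_mul]
  have h : (fun _ : Fin L => Qmat N * Pmat N) = fun _ => (1 : Matrix (Fin N) (Fin N) ℂ) :=
    funext fun _ => QP_one hN
  rw [h, tensor_one]

lemma conj_tensor (M : Fin L → Matrix (Fin N) (Fin N) ℂ) :
    Vmat N L * tensorOp M * Umat N L = tensorOp (fun j => Qmat N * M j * Pmat N) := by
  rw [Vmat, Umat, tensor_mul, tensor_mul]

lemma conjA0 (hN : 3 ≤ N) :
    Vmat N L * A0op N L * Umat N L
      = (4 / (N : ℂ)) • ∑ i : Fin L, ∑ m ∈ Finset.Icc 1 (N - 1),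
          (1 - (omegaR N ^ m)⁻¹)⁻¹ • siteOp i (Xmat N ^ (2 * m)) := by
  rw [A0op, Matrix.mul_smul, Matrix.smul_mul, Matrix.mul_sum, Matrix.sum_mul]
  refine congrArg _ (Finset.sum_congr rfl fun i _ => ?_)
  rw [Matrix.mul_sum, Matrix.sum_mul]
  refine Finset.sum_congr rfl fun m _ => ?_
  rw [Matrix.mul_smul, Matrix.smul_mul]
  refine congrArg _ ?_
  rw [siteOp, conj_tensor, siteOp]
  refine congrArg _ (funext fun j => ?_)
  by_cases hji : j = i
  · rw [if_pos hji, if_pos hji, matConj_pow (PQ_one hN) (QP_one hN), conj_Z hN]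
  · rw [if_neg hji, if_neg hji, Matrix.mul_one, QP_one hN]

end TensorConj

section A1Conj

variable {N L : ℕ}

/-- Cyclic successor on `Fin L`. -/
def succF {L : ℕ} (i : Fin L) : Fin L :=
  ⟨((i:ℕ) + 1) % L, Nat.mod_lt _ (Nat.lt_of_le_of_lt (Nat.zero_le _) i.isLt)⟩

/-- Cyclic predecessor on `Fin L`. -/
def predF {L : ℕ} (i : Fin L) : Fin L :=
  ⟨((i:ℕ) + L - 1) % L, Nat.mod_lt _ (Nat.lt_of_le_of_lt (Nat.zero_le _) i.isLt)⟩

lemma succF_ne (hL : 2 ≤ L) (i : Fin L) : succF i ≠ i :=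
  fin_succ_ne hL i (succF i) rfl

lemma succF_predF (hL : 2 ≤ L) (i : Fin L) : succF (predF i) = i := by
  apply Fin.ext
  show (((i:ℕ) + L - 1) % L + 1) % L = (i:ℕ)
  rw [Nat.mod_add_mod]
  have h1 : (i:ℕ) + L - 1 + 1 = (i:ℕ) + L := by omega
  rw [h1, Nat.add_mod_right, Nat.mod_eq_of_lt i.isLt]

lemma predF_succF (hL : 2 ≤ L) (i : Fin L) : predF (succF i) = i := by
  apply Fin.ext
  show (((i:ℕ) + 1) % L + L - 1) % L = (i:ℕ)
  have h1 : ((i:ℕ) + 1) % L + L - 1 = ((i:ℕ) + 1) % L + (L - 1) := by omega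
  rw [h1, Nat.mod_add_mod]
  have h2 : (i:ℕ) + 1 + (L - 1) = (i:ℕ) + L := by omega
  rw [h2, Nat.add_mod_right, Nat.mod_eq_of_lt i.isLt]

lemma prod_two_sites {f : Fin L → ℂ} (i i' : Fin L) (hne : i ≠ i')
    (h1 : ∀ j, j ≠ i → j ≠ i' → f j = 1) : ∏ j, f j = f i * f i' := by
  rw [← Finset.prod_subset (Finset.subset_univ ({i, i'} : Finset (Fin L)))
    (fun x _ hx => by
      simp only [Finset.mem_insert, Finset.mem_singleton] at hx
      push_neg at hx
      exact h1 x hx.1 hx.2)]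
  exact Finset.prod_pair hne

lemma predF_ne (hL : 2 ≤ L) (i : Fin L) : predF i ≠ i := by
  intro hc
  have := succF_predF hL i
  rw [hc] at this
  exact succF_ne hL i this

/-- `rfun i σ` is the reduced exponent `((N+1)/2)·(σ_i − σ_{i+1}) mod N`. -/
def rfun (N : ℕ) {L : ℕ} (i : Fin L) (σ : Fin L → Fin N) : ℕ :=
  (((N+1)/2) * (((σ i : ℕ) + (N - (σ (succF i) : ℕ))) % N)) % N

lemma rfun_lt (hN : 3 ≤ N) (i : Fin L) (σ : Fin L → Fin N) : rfun N i σ < N :=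
  Nat.mod_lt _ (by omega)

/-- Eigenvalue function of the Fourier-conjugated `A₁`. -/
def evec (N L : ℕ) (σ : Fin L → Fin N) : ℂ :=
  (4 / (N:ℂ)) * ∑ i, (((N:ℂ)-1)/2 - ((rfun N i σ : ℕ) : ℂ))

lemma hpow_key (hN : 3 ≤ N) (hNodd : Odd N) (i : Fin L) (σ : Fin L → Fin N) (m : ℕ) :
    (qR N ^ ((σ i : ℕ))) ^ m * ((qR N ^ ((σ (succF i) : ℕ))) ^ m)⁻¹
      = (omegaR N ^ m) ^ (rfun N i σ) := by
  set a : ℕ := (σ i : ℕ) with ha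
  set b : ℕ := (σ (succF i) : ℕ) with hb
  have hbN : b < N := (σ (succF i)).isLt
  set t : ℕ := (a + (N - b)) % N with ht
  have hmul : (qR N ^ t) * qR N ^ b = qR N ^ a := by
    rw [ht, ← pow_mod_eq (qN_one hN), ← pow_add]
    have he : a + (N - b) + b = a + N := by omega
    rw [he, pow_add, qN_one hN, mul_one]
  have hqt : qR N ^ a * (qR N ^ b)⁻¹ = qR N ^ t := by
    rw [← hmul, mul_inv_cancel_right₀ (pow_ne_zero _ (q_ne_zero hN))]
  have hlhs : (qR N ^ a) ^ m * ((qR N ^ b) ^ m)⁻¹ = (qR N ^ t) ^ m := by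
    rw [← inv_pow, ← mul_pow, hqt]
  rw [hlhs]
  have h2h : 2 * ((N+1)/2) = N + 1 := by
    obtain ⟨k, hk⟩ := hNodd
    omega
  have hωN : (omegaR N ^ m) ^ N = 1 := by
    rw [← pow_mul, mul_comm, pow_mul, (homega_prim hN hNodd).pow_eq_one, one_pow]
  have hr : (omegaR N ^ m) ^ (rfun N i σ) = (qR N ^ t) ^ m := by
    rw [rfun, ← ht, ← pow_mod_eq hωN, ← pow_mul, omegaR, ← pow_mul]
    have hexp : 2 * (m * ((N+1)/2 * t)) = (N+1) * (m * t) := by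
      calc 2 * (m * ((N+1)/2 * t)) = (2 * ((N+1)/2)) * (m * t) := by ring
      _ = (N+1) * (m * t) := by rw [h2h]
    rw [hexp, pow_mul]
    have hq1 : qR N ^ (N+1) = qR N := by
      rw [pow_succ, qN_one hN, one_mul]
    rw [hq1, mul_comm m t, pow_mul]
  rw [hr]

lemma conj_A1_term (hN : 3 ≤ N) (hL : 2 ≤ L) (i : Fin L) (m : ℕ) :
    Vmat N L * (tensorOp fun j =>
        if (j : ℕ) = (i : ℕ) then XmatInv N ^ m
        else if (j : ℕ) = ((i : ℕ) + 1) % L then Xmat N ^ m else 1) * Umat N L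
    = Matrix.diagonal (fun σ : Fin L → Fin N =>
        (qR N ^ ((σ i : ℕ))) ^ m * ((qR N ^ ((σ (succF i) : ℕ))) ^ m)⁻¹) := by
  have hg : ∀ j : Fin L, Qmat N * (if (j:ℕ) = (i:ℕ) then XmatInv N ^ m
        else if (j:ℕ) = ((i:ℕ)+1) % L then Xmat N ^ m else 1) * Pmat N
      = Matrix.diagonal (fun s : Fin N =>
          if (j:ℕ) = (i:ℕ) then (qR N ^ (s:ℕ)) ^ m
          else if (j:ℕ) = ((i:ℕ)+1) % L then ((qR N ^ (s:ℕ)) ^ m)⁻¹ else 1) := by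
    intro j
    split_ifs with h1 h2
    · have hfn : ((fun s : Fin N => qR N ^ (s:ℕ)) ^ m) = (fun s : Fin N => (qR N ^ (s:ℕ)) ^ m) := by
        funext s; rw [Pi.pow_apply]
      rw [matConj_pow (PQ_one hN) (QP_one hN), conj_Xinv hN, Matrix.diagonal_pow, hfn]
    · have hfn : ((fun s : Fin N => (qR N ^ (s:ℕ))⁻¹) ^ m)
          = (fun s : Fin N => ((qR N ^ (s:ℕ)) ^ m)⁻¹) := by
        funext s; rw [Pi.pow_apply, inv_pow]
      rw [matConj_pow (PQ_one hN) (QP_one hN), conj_X hN, Matrix.diagonal_pow, hfn]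
    · rw [Matrix.mul_one, QP_one hN, Matrix.diagonal_one]
  calc Vmat N L * (tensorOp fun j =>
        if (j : ℕ) = (i : ℕ) then XmatInv N ^ m
        else if (j : ℕ) = ((i : ℕ) + 1) % L then Xmat N ^ m else 1) * Umat N L
      = tensorOp (fun j => Qmat N * (if (j:ℕ) = (i:ℕ) then XmatInv N ^ m
          else if (j:ℕ) = ((i:ℕ)+1) % L then Xmat N ^ m else 1) * Pmat N) := conj_tensor _
    _ = tensorOp (fun j => Matrix.diagonal (fun s : Fin N =>
          if (j:ℕ) = (i:ℕ) then (qR N ^ (s:ℕ)) ^ m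
          else if (j:ℕ) = ((i:ℕ)+1) % L then ((qR N ^ (s:ℕ)) ^ m)⁻¹ else 1)) := by
        exact congrArg _ (funext fun j => hg j)
    _ = Matrix.diagonal (fun σ : Fin L → Fin N => ∏ j : Fin L, (
          if (j:ℕ) = (i:ℕ) then (qR N ^ ((σ j : ℕ))) ^ m
          else if (j:ℕ) = ((i:ℕ)+1) % L then ((qR N ^ ((σ j : ℕ))) ^ m)⁻¹ else 1)) := tensor_diag _
    _ = Matrix.diagonal (fun σ : Fin L → Fin N =>
        (qR N ^ ((σ i : ℕ))) ^ m * ((qR N ^ ((σ (succF i) : ℕ))) ^ m)⁻¹) := by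
        refine congrArg _ (funext fun σ => ?_)
        rw [prod_two_sites i (succF i) (Ne.symm (succF_ne hL i))
          (fun j hji hji' => by
            rw [if_neg (fun hc : (j:ℕ) = (i:ℕ) => hji (Fin.ext hc)),
              if_neg (fun hc : (j:ℕ) = ((i:ℕ)+1) % L => hji' (Fin.ext hc))])]
        rw [if_pos rfl,
          if_neg (fun hc : ((succF i : Fin L):ℕ) = (i:ℕ) => (succF_ne hL i) (Fin.ext hc)),
          if_pos (show ((succF i : Fin L):ℕ) = ((i:ℕ)+1) % L from rfl)]

end A1Conj

section DG2

variable {N L : ℕ}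

lemma conjA1 (hN : 3 ≤ N) (hNodd : Odd N) (hL : 2 ≤ L) :
    Vmat N L * A1op N L * Umat N L = Matrix.diagonal (evec N L) := by
  rw [A1op, Matrix.mul_smul, Matrix.smul_mul, Matrix.mul_sum, Matrix.sum_mul]
  have hstep : ∀ i : Fin L,
      Vmat N L * (∑ m ∈ Finset.Icc 1 (N-1), (1 - (omegaR N ^ m)⁻¹)⁻¹ •
        tensorOp fun j =>
          if (j : ℕ) = (i : ℕ) then XmatInv N ^ m
          else if (j : ℕ) = ((i : ℕ) + 1) % L then Xmat N ^ m else 1) * Umat N L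
      = ∑ m ∈ Finset.Icc 1 (N-1), (1 - (omegaR N ^ m)⁻¹)⁻¹ •
          Matrix.diagonal (fun σ : Fin L → Fin N =>
            (qR N ^ ((σ i : ℕ))) ^ m * ((qR N ^ ((σ (succF i) : ℕ))) ^ m)⁻¹) := by
    intro i
    rw [Matrix.mul_sum, Matrix.sum_mul]
    exact Finset.sum_congr rfl fun m _ => by
      rw [Matrix.mul_smul, Matrix.smul_mul, conj_A1_term hN hL]
  rw [Finset.sum_congr rfl fun i _ => hstep i]
  ext σ τ
  by_cases h : σ = τ
  · subst h
    simp only [Matrix.smul_apply, Matrix.sum_apply, Matrix.diagonal_apply_eq, smul_eq_mul]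
    rw [evec]
    congr 1
    refine Finset.sum_congr rfl fun i _ => ?_
    simp_rw [hpow_key hN hNodd i σ]
    exact key_sum hN hNodd (rfun N i σ) (rfun_lt hN i σ)
  · simp only [Matrix.smul_apply, Matrix.sum_apply, Matrix.diagonal_apply_ne _ h,
      smul_eq_mul, mul_zero, Finset.sum_const_zero]

lemma evec_sub (σ τ : Fin L → Fin N) :
    evec N L σ - evec N L τ
      = (4 / (N:ℂ)) * ∑ j, (((rfun N j τ : ℕ) : ℂ) - ((rfun N j σ : ℕ) : ℂ)) := by
  rw [evec, evec, ← mul_sub, ← Finset.sum_sub_distrib]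
  congr 1
  exact Finset.sum_congr rfl fun j _ => by ring

lemma rfun_zmod (j : Fin L) (ρ : Fin L → Fin N) :
    ((rfun N j ρ : ℕ) : ZMod N)
      = (((N+1)/2 : ℕ) : ZMod N) * (((ρ j : ℕ) : ZMod N) - ((ρ (succF j) : ℕ) : ZMod N)) := by
  rw [rfun, ZMod.natCast_mod, Nat.cast_mul, ZMod.natCast_mod, Nat.cast_add,
    Nat.cast_sub (le_of_lt (ρ (succF j)).isLt), ZMod.natCast_self]
  ring

lemma half_two (hNodd : Odd N) : ((((N+1)/2 : ℕ)) : ZMod N) * 2 = 1 := by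
  have hnat : 2 * ((N+1)/2) = N + 1 := by
    obtain ⟨k, hk⟩ := hNodd
    omega
  calc ((((N+1)/2 : ℕ)) : ZMod N) * 2 = (((2 * ((N+1)/2) : ℕ)) : ZMod N) := by push_cast; ring
  _ = (((N+1 : ℕ)) : ZMod N) := by rw [hnat]
  _ = 1 := by push_cast [ZMod.natCast_self]; ring

lemma gap2 (hN : 3 ≤ N) (hNodd : Odd N) (hL : 2 ≤ L) (σ τ : Fin L → Fin N)
    (h : (Vmat N L * A0op N L * Umat N L) σ τ ≠ 0) :
    (evec N L σ - evec N L τ)^3 = 16 * (evec N L σ - evec N L τ) := by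
  rw [conjA0 hN] at h
  simp only [Matrix.smul_apply, Matrix.sum_apply, smul_eq_mul] at h
  have hsum : (∑ i : Fin L, ∑ m ∈ Finset.Icc 1 (N-1), (1 - (omegaR N ^ m)⁻¹)⁻¹ *
      siteOp i (Xmat N ^ (2*m)) σ τ) ≠ 0 := fun h0 => h (by rw [h0, mul_zero])
  obtain ⟨i, -, hi⟩ := Finset.exists_ne_zero_of_sum_ne_zero hsum
  obtain ⟨m, hm, him⟩ := Finset.exists_ne_zero_of_sum_ne_zero hi
  have ht : siteOp i (Xmat N ^ (2*m)) σ τ ≠ 0 := fun hc => him (by rw [hc, mul_zero])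
  rw [siteOp, tensorOp, Matrix.of_apply] at ht
  have hfac := Finset.prod_ne_zero_iff.mp ht
  have hXi : (Xmat N ^ (2*m)) (σ i) (τ i) ≠ 0 := by
    have := hfac i (Finset.mem_univ i)
    rwa [if_pos rfl] at this
  have hother : ∀ j, j ≠ i → σ j = τ j := by
    intro j hji
    have := hfac j (Finset.mem_univ j)
    rw [if_neg hji] at this
    by_contra hc
    rw [Matrix.one_apply_ne hc] at this
    exact this rfl
  have rel := Xmat_pow_rel (2*m) (σ i) (τ i) hXi
  have hpi : predF i ≠ i := predF_ne hL i
  have hsp : succF (predF i) = i := succF_predF hL i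
  have hsi : succF i ≠ i := succF_ne hL i
  -- rfun is unchanged away from i and predF i
  have hsame : ∀ j, j ≠ i → j ≠ predF i → rfun N j σ = rfun N j τ := by
    intro j hji hjp
    have h1 : σ j = τ j := hother j hji
    have h2 : σ (succF j) = τ (succF j) := by
      refine hother (succF j) (fun hc => hjp ?_)
      rw [← hc, predF_succF hL j]
    rw [rfun, rfun, h1, h2]
  have h2half := half_two (N := N) hNodd
  -- mod-N relations for the two affected rfun values
  have hrel_i : ((rfun N i σ : ℕ) : ZMod N) = ((rfun N i τ : ℕ) : ZMod N) + m := by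
    rw [rfun_zmod, rfun_zmod, hother (succF i) hsi, rel]
    push_cast
    linear_combination ((m : ZMod N)) * h2half
  have hrel_p : ((rfun N (predF i) σ : ℕ) : ZMod N)
      = ((rfun N (predF i) τ : ℕ) : ZMod N) - m := by
    rw [rfun_zmod, rfun_zmod, hother (predF i) hpi, hsp, rel]
    push_cast
    linear_combination (-(m : ZMod N)) * h2half
  -- integer gap argument
  have hu : (N:ℤ) ∣ ((((rfun N (predF i) τ : ℕ) : ℤ) - ((rfun N (predF i) σ : ℕ) : ℤ)) - m) := by
    rw [← ZMod.intCast_zmod_eq_zero_iff_dvd]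
    push_cast
    linear_combination -hrel_p
  have hv : (N:ℤ) ∣ ((((rfun N i τ : ℕ) : ℤ) - ((rfun N i σ : ℕ) : ℤ)) + m) := by
    rw [← ZMod.intCast_zmod_eq_zero_iff_dvd]
    push_cast
    linear_combination -hrel_i
  have hub : -(N:ℤ) < (((rfun N (predF i) τ : ℕ) : ℤ) - ((rfun N (predF i) σ : ℕ) : ℤ))
      ∧ (((rfun N (predF i) τ : ℕ) : ℤ) - ((rfun N (predF i) σ : ℕ) : ℤ)) < N := by
    constructor <;>
    · have h1 : ((rfun N (predF i) τ : ℕ) : ℤ) < N := by exact_mod_cast rfun_lt hN _ τ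
      have h2 : ((rfun N (predF i) σ : ℕ) : ℤ) < N := by exact_mod_cast rfun_lt hN _ σ
      omega
  have hvb : -(N:ℤ) < (((rfun N i τ : ℕ) : ℤ) - ((rfun N i σ : ℕ) : ℤ))
      ∧ (((rfun N i τ : ℕ) : ℤ) - ((rfun N i σ : ℕ) : ℤ)) < N := by
    constructor <;>
    · have h1 : ((rfun N i τ : ℕ) : ℤ) < N := by exact_mod_cast rfun_lt hN _ τ
      have h2 : ((rfun N i σ : ℕ) : ℤ) < N := by exact_mod_cast rfun_lt hN _ σ
      omega
  apply gap_arith hN hu hv hub hvb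
  rw [evec_sub]
  congr 1
  rw [sum_two_sites (predF i) i hpi
    (fun j hjp hji => by rw [hsame j hji hjp]; ring)]
  push_cast
  ring

lemma dg_transfer {n : Type*} [Fintype n] [DecidableEq n] (U V A B : Matrix n n ℂ)
    (hUV : U * V = 1) (hVU : V * U = 1)
    (h : (V*A*U) * ((V*A*U) * ((V*A*U)*(V*B*U) - (V*B*U)*(V*A*U))
            - ((V*A*U)*(V*B*U) - (V*B*U)*(V*A*U))*(V*A*U))
        - ((V*A*U) * ((V*A*U)*(V*B*U) - (V*B*U)*(V*A*U))
            - ((V*A*U)*(V*B*U) - (V*B*U)*(V*A*U))*(V*A*U)) * (V*A*U)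
      = (16:ℂ) • ((V*A*U)*(V*B*U) - (V*B*U)*(V*A*U))) :
    A * (A * (A*B - B*A) - (A*B - B*A)*A) - (A * (A*B - B*A) - (A*B-B*A)*A)*A
      = (16:ℂ) • (A*B - B*A) := by
  have hmul : ∀ X Y : Matrix n n ℂ, (V*X*U)*(V*Y*U) = V*(X*Y)*U :=
    fun X Y => matConj_mul hUV X Y
  have hsub : ∀ X Y : Matrix n n ℂ, (V*X*U) - (V*Y*U) = V*(X-Y)*U := by
    intro X Y
    rw [Matrix.mul_sub, Matrix.sub_mul]
  simp only [hmul, hsub] at h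
  have cancel : ∀ X : Matrix n n ℂ, U * (V * X * U) * V = X := by
    intro X
    calc U * (V * X * U) * V = (U*V) * (X * (U*V)) := by simp only [Matrix.mul_assoc]
    _ = X := by rw [hUV, Matrix.mul_one, Matrix.one_mul]
  have h2 := congrArg (fun X => U * X * V) h
  rw [cancel, Matrix.mul_smul, Matrix.smul_mul, cancel] at h2
  exact h2

end DG2

/-- the Onsager-algebra generators of the von Gehlen–Rittenberg Hamiltonian
satisfy the Dolan–Grady conditions. -/
theorem dolan_grady_conditions (N L : ℕ) (hN : 3 ≤ N) (hNodd : Odd N) (hL : 2 ≤ L) :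
    (A0op N L * (A0op N L * (A0op N L * A1op N L - A1op N L * A0op N L) -
        (A0op N L * A1op N L - A1op N L * A0op N L) * A0op N L) -
      (A0op N L * (A0op N L * A1op N L - A1op N L * A0op N L) -
        (A0op N L * A1op N L - A1op N L * A0op N L) * A0op N L) * A0op N L) =
      (16 : ℂ) • (A0op N L * A1op N L - A1op N L * A0op N L) ∧
    (A1op N L * (A1op N L * (A1op N L * A0op N L - A0op N L * A1op N L) -
        (A1op N L * A0op N L - A0op N L * A1op N L) * A1op N L) -
      (A1op N L * (A1op N L * A0op N L - A0op N L * A1op N L) -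
        (A1op N L * A0op N L - A0op N L * A1op N L) * A1op N L) * A1op N L) =
      (16 : ℂ) • (A1op N L * A0op N L - A0op N L * A1op N L) := by
  constructor
  · rw [A0_diag hN hNodd]
    exact dg_aux (dvec N L) (A1op N L) (fun σ τ hB => gap1 hN hNodd hL σ τ hB)
  · have key := dg_aux (evec N L) (Vmat N L * A0op N L * Umat N L)
      (fun σ τ hB => gap2 hN hNodd hL σ τ hB)
    rw [← conjA1 hN hNodd hL] at key
    exact dg_transfer (Umat N L) (Vmat N L) (A1op N L) (A0op N L)
      (UV_one hN) (VU_one hN) key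
end
end
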